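/- arXiv:1906.03955 — 8 statements merged into one kernel-verified Lean document; each statement's English description precedes it below -/
import Mathlib

section
/- Let the set of facts be partitioned into an agent's own facts Own and another agent's private facts Priv, and let E denote the encryption map on states. For any finite sequence of states s_0, …, s_{n-1} with accumulated costs g_0, …, g_{n-1} and any new state s with accumulated cost g(s), the accumulated-cost novelty of the encrypted state E(s) computed with respect to the encrypted sequence E(s_0), …, E(s_{n-1}) (with the same costs) is less than or equal to the accumulated-cost novelty of s computed with respect to the original sequence s_0, …, s_{n-1}. -/
/-- The accumulated-cost novelty `w_g(s)` of a new state `s` (a finite set of facts)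
with accumulated cost `gs`, relative to previously generated states `seq 0, …, seq (n-1)`
with accumulated costs `g 0, …, g (n-1)`: the size of a smallest nonempty subset
`t ⊆ s` such that every index `j` with `t ⊆ seq j` has `g j > gs`;
`⊤` (infinite) if no such subset exists. -/
noncomputable def novelty {Fact : Type} [DecidableEq Fact]
    {n : ℕ} (seq : Fin n → Finset Fact) (g : Fin n → ℝ)
    (s : Finset Fact) (gs : ℝ) : ℕ∞ :=
  sInf {m : ℕ∞ | ∃ t : Finset Fact, t ⊆ s ∧ t.Nonempty ∧
    (∀ j : Fin n, t ⊆ seq j → gs < g j) ∧ m = (t.card : ℕ∞)}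

/-- The encryption of a state `s`: the private part `s ∩ Priv`, if nonempty,
is replaced by the single dummy fact `enc (s ∩ Priv)`. -/
def encState {Fact : Type} [DecidableEq Fact] (Own Priv : Finset Fact)
    (enc : Finset Fact → Fact) (s : Finset Fact) : Finset Fact :=
  (s ∩ Own) ∪ (if (s ∩ Priv).Nonempty then {enc (s ∩ Priv)} else ∅)

/-- Lemma 1: the accumulated-cost novelty computed over the encrypted states is
lower than or equal to the novelty computed over the unencrypted states. -/
theorem novelty_encrypted_le_novelty {Fact : Type} [DecidableEq Fact]
    (Own Priv : Finset Fact) (hdisj : Disjoint Own Priv)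
    (enc : Finset Fact → Fact)
    (henc_inj : ∀ p q : Finset Fact, p ⊆ Priv → q ⊆ Priv → p.Nonempty → q.Nonempty →
      enc p = enc q → p = q)
    (henc_own : ∀ p : Finset Fact, p ⊆ Priv → p.Nonempty → enc p ∉ Own)
    {n : ℕ} (seq : Fin n → Finset Fact) (g : Fin n → ℝ)
    (hseq : ∀ j, seq j ⊆ Own ∪ Priv) (hg : ∀ j, 0 ≤ g j)
    (s : Finset Fact) (hs : s ⊆ Own ∪ Priv) (gs : ℝ) (hgs : 0 ≤ gs) :
    novelty (fun j => encState Own Priv enc (seq j)) g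
        (encState Own Priv enc s) gs
      ≤ novelty seq g s gs := by
  unfold novelty
  apply le_sInf
  rintro m ⟨t, hts, htne, hprop, rfl⟩
  classical
  -- the encrypted witness
  set t' : Finset Fact :=
    (t ∩ Own) ∪ (if (t ∩ Priv).Nonempty then {enc (s ∩ Priv)} else ∅) with ht'def
  have htsub : t ⊆ Own ∪ Priv := hts.trans hs
  -- t' ⊆ encState s
  have hsub : t' ⊆ encState Own Priv enc s := by
    apply Finset.union_subset
    · intro x hx
      exact Finset.mem_union_left _
        (Finset.mem_inter.mpr ⟨hts (Finset.mem_inter.mp hx).1,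
          (Finset.mem_inter.mp hx).2⟩)
    · split_ifs with h
      · have hsP : (s ∩ Priv).Nonempty := by
          obtain ⟨x, hx⟩ := h
          exact ⟨x, Finset.mem_inter.mpr ⟨hts (Finset.mem_inter.mp hx).1,
            (Finset.mem_inter.mp hx).2⟩⟩
        intro x hx
        rw [Finset.mem_singleton] at hx
        subst hx
        exact Finset.mem_union_right _ (by simp [hsP])
      · exact Finset.empty_subset _
  -- t' nonempty
  have hne : t'.Nonempty := by
    obtain ⟨x, hx⟩ := htne
    rcases Finset.mem_union.mp (htsub hx) with hxo | hxp
    · exact ⟨x, Finset.mem_union_left _ (Finset.mem_inter.mpr ⟨hx, hxo⟩)⟩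
    · have h : (t ∩ Priv).Nonempty := ⟨x, Finset.mem_inter.mpr ⟨hx, hxp⟩⟩
      exact ⟨enc (s ∩ Priv), Finset.mem_union_right _ (by simp [h])⟩
  -- the novelty property
  have hprop' : ∀ j : Fin n, t' ⊆ encState Own Priv enc (seq j) → gs < g j := by
    intro j hj
    apply hprop j
    intro x hx
    rcases Finset.mem_union.mp (htsub hx) with hxo | hxp
    · have hx' : x ∈ encState Own Priv enc (seq j) :=
        hj (Finset.mem_union_left _ (Finset.mem_inter.mpr ⟨hx, hxo⟩))
      rcases Finset.mem_union.mp hx' with h1 | h2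
      · exact (Finset.mem_inter.mp h1).1
      · exfalso
        split_ifs at h2 with hP
        · rw [Finset.mem_singleton] at h2
          subst h2
          exact henc_own _ Finset.inter_subset_right hP hxo
        · simp at h2
    · -- x private
      have htP : (t ∩ Priv).Nonempty := ⟨x, Finset.mem_inter.mpr ⟨hx, hxp⟩⟩
      have hsP : (s ∩ Priv).Nonempty :=
        ⟨x, Finset.mem_inter.mpr ⟨hts hx, hxp⟩⟩
      have hmem : enc (s ∩ Priv) ∈ encState Own Priv enc (seq j) :=
        hj (Finset.mem_union_right _ (by simp [htP]))
      rcases Finset.mem_union.mp hmem with h1 | h2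
      · exact absurd (Finset.mem_inter.mp h1).2
          (henc_own _ Finset.inter_subset_right hsP)
      · split_ifs at h2 with hQ
        · rw [Finset.mem_singleton] at h2
          have heq : s ∩ Priv = seq j ∩ Priv :=
            henc_inj _ _ Finset.inter_subset_right Finset.inter_subset_right
              hsP hQ h2
          have : x ∈ seq j ∩ Priv := by
            rw [← heq]; exact Finset.mem_inter.mpr ⟨hts hx, hxp⟩
          exact (Finset.mem_inter.mp this).1
        · simp at h2
  -- cardinality bound
  have hcard : t'.card ≤ t.card := by
    have ht : t = (t ∩ Own) ∪ (t ∩ Priv) := by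
      ext x
      simp only [Finset.mem_union, Finset.mem_inter]
      constructor
      · intro hx
        rcases Finset.mem_union.mp (htsub hx) with h | h
        · exact Or.inl ⟨hx, h⟩
        · exact Or.inr ⟨hx, h⟩
      · rintro (⟨h, _⟩ | ⟨h, _⟩) <;> exact h
    have hdis : Disjoint (t ∩ Own) (t ∩ Priv) :=
      Disjoint.mono Finset.inter_subset_right Finset.inter_subset_right hdisj
    have hct : t.card = (t ∩ Own).card + (t ∩ Priv).card := by
      conv_lhs => rw [ht]
      exact Finset.card_union_of_disjoint hdis
    calc t'.card ≤ (t ∩ Own).card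
          + (if (t ∩ Priv).Nonempty then ({enc (s ∩ Priv)} : Finset Fact)
              else ∅).card := Finset.card_union_le _ _
      _ ≤ (t ∩ Own).card + (t ∩ Priv).card := by
          apply Nat.add_le_add_left
          split_ifs with h
          · rw [Finset.card_singleton]
            exact Finset.card_pos.mpr h
          · simp
      _ = t.card := hct.symm
  refine le_trans (sInf_le ⟨t', hsub, hne, hprop', rfl⟩) ?_
  exact_mod_cast hcard
end

section
/- Let the set of facts be partitioned into an agent's own facts Own and another agent's private facts Priv, and let E denote the encryption map on states. Let s_0, …, s_{n-1} be a sequence of states with accumulated costs g_0, …, g_{n-1}, and s a new state with cost g(s). If t ⊆ s is a nonempty subset consisting only of facts in Own such that every index j < n with t ⊆ s_j satisfies g_j > g(s), then t ⊆ E(s) and every index j < n with t ⊆ E(s_j) satisfies g_j > g(s); consequently the accumulated-cost novelty of E(s) with respect to E(s_0), …, E(s_{n-1}) is at most |t|. -/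
/-- If `t ⊆ s` is a nonempty witness tuple consisting only of the agent's own facts,
then `t` is also a witness tuple for the encrypted state `E s` with respect to the
encrypted sequence, so the novelty of `E s` is at most `|t|`. -/
theorem own_witness_encrypted {Fact : Type} [DecidableEq Fact]
    (Own Priv : Finset Fact) (hdisj : Disjoint Own Priv)
    (enc : Finset Fact → Fact)
    (henc_inj : ∀ p q : Finset Fact, p ⊆ Priv → q ⊆ Priv → p.Nonempty → q.Nonempty →
      enc p = enc q → p = q)
    (henc_own : ∀ p : Finset Fact, p ⊆ Priv → p.Nonempty → enc p ∉ Own)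
    {n : ℕ} (seq : Fin n → Finset Fact) (g : Fin n → ℝ)
    (hseq : ∀ j, seq j ⊆ Own ∪ Priv) (hg : ∀ j, 0 ≤ g j)
    (s : Finset Fact) (hs : s ⊆ Own ∪ Priv) (gs : ℝ) (hgs : 0 ≤ gs)
    (t : Finset Fact) (hts : t ⊆ s) (htne : t.Nonempty) (htown : t ⊆ Own)
    (hwit : ∀ j : Fin n, t ⊆ seq j → gs < g j) :
    t ⊆ encState Own Priv enc s ∧
    (∀ j : Fin n, t ⊆ encState Own Priv enc (seq j) → gs < g j) ∧
    novelty (fun j => encState Own Priv enc (seq j)) g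
        (encState Own Priv enc s) gs ≤ (t.card : ℕ∞) := by
  have hsub : t ⊆ encState Own Priv enc s := by
    intro x hx
    exact Finset.mem_union_left _ (Finset.mem_inter.mpr ⟨hts hx, htown hx⟩)
  have hwit' : ∀ j : Fin n, t ⊆ encState Own Priv enc (seq j) → gs < g j := by
    intro j hj
    apply hwit j
    intro x hx
    have hxo := htown hx
    have := hj hx
    rcases Finset.mem_union.mp this with h | h
    · exact (Finset.mem_inter.mp h).1
    · by_cases hne : (seq j ∩ Priv).Nonempty
      · simp [hne] at h
        subst h
        exact absurd hxo (henc_own _ (Finset.inter_subset_right) hne)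
      · simp [hne] at h
  refine ⟨hsub, hwit', ?_⟩
  exact sInf_le ⟨t, hsub, htne, hwit', rfl⟩
end

section
/- Let the set of facts be partitioned into an agent's own facts Own and another agent's private facts Priv, and let E denote the encryption map on states. Let s_0, …, s_{n-1} be a sequence of states with accumulated costs g_0, …, g_{n-1}, and s a new state with cost g(s). If s ∩ Priv is nonempty and for every index j < n with g_j ≤ g(s) one has s_j ∩ Priv ≠ s ∩ Priv, then the accumulated-cost novelty of E(s) with respect to E(s_0), …, E(s_{n-1}) equals 1 (witnessed by the singleton {[s ∩ Priv]}). -/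
/-- If the private part `s ∩ Priv` of `s` is nonempty and differs from the private
part of every previously generated state whose accumulated cost is at most `gs`,
then the encrypted state `E s` has accumulated-cost novelty `1` with respect to the
encrypted sequence (witnessed by the singleton containing the dummy fact
`enc (s ∩ Priv)`). -/
theorem new_private_part_novelty_one {Fact : Type} [DecidableEq Fact]
    (Own Priv : Finset Fact) (hdisj : Disjoint Own Priv)
    (enc : Finset Fact → Fact)
    (henc_inj : ∀ p q : Finset Fact, p ⊆ Priv → q ⊆ Priv → p.Nonempty → q.Nonempty →
      enc p = enc q → p = q)
    (henc_own : ∀ p : Finset Fact, p ⊆ Priv → p.Nonempty → enc p ∉ Own)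
    {n : ℕ} (seq : Fin n → Finset Fact) (g : Fin n → ℝ)
    (hseq : ∀ j, seq j ⊆ Own ∪ Priv) (hg : ∀ j, 0 ≤ g j)
    (s : Finset Fact) (hs : s ⊆ Own ∪ Priv) (gs : ℝ) (hgs : 0 ≤ gs)
    (hpriv : (s ∩ Priv).Nonempty)
    (hnew : ∀ j : Fin n, g j ≤ gs → seq j ∩ Priv ≠ s ∩ Priv) :
    novelty (fun j => encState Own Priv enc (seq j)) g
        (encState Own Priv enc s) gs = 1 := by
  apply le_antisymm
  · apply sInf_le
    refine ⟨{enc (s ∩ Priv)}, ?_, Finset.singleton_nonempty _, ?_, by simp⟩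
    · intro x hx
      simp only [Finset.mem_singleton] at hx
      subst hx
      simp [encState, hpriv]
    · intro j hj
      have hmem : enc (s ∩ Priv) ∈ encState Own Priv enc (seq j) :=
        hj (Finset.mem_singleton_self _)
      simp only [encState, Finset.mem_union] at hmem
      have hno : enc (s ∩ Priv) ∉ seq j ∩ Own := by
        intro h
        exact henc_own (s ∩ Priv) Finset.inter_subset_right hpriv
          (Finset.mem_of_mem_inter_right h)
      rcases hmem with h | h
      · exact absurd h hno
      · by_cases hne : (seq j ∩ Priv).Nonempty
        · simp only [if_pos hne, Finset.mem_singleton] at h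
          have heq : seq j ∩ Priv = s ∩ Priv :=
            henc_inj _ _ Finset.inter_subset_right Finset.inter_subset_right hne hpriv h.symm
          by_contra hle
          exact hnew j (le_of_not_gt hle) heq
        · simp [if_neg hne] at h
  · apply le_sInf
    rintro m ⟨t, -, htne, -, rfl⟩
    exact_mod_cast Nat.one_le_iff_ne_zero.mpr (Finset.card_ne_zero_of_mem htne.choose_spec)
end

section
/- Let the set of facts be partitioned into an agent's own facts Own and another agent's private facts Priv, and let E denote the encryption map on states. Let s_0, …, s_{n-1} be a sequence of states with accumulated costs g_0, …, g_{n-1}, and s a new state with cost g(s). Suppose t ⊆ s is a nonempty subset containing exactly m ≥ 1 facts of Priv such that every index j < n with t ⊆ s_j satisfies g_j > g(s). Then the set t' = (t ∩ Own) ∪ {[s ∩ Priv]} satisfies: t' ⊆ E(s), |t'| = |t| − m + 1, and every index j < n with t' ⊆ E(s_j) satisfies g_j > g(s); consequently the accumulated-cost novelty of E(s) with respect to E(s_0), …, E(s_{n-1}) is at most |t| − m + 1. -/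
/-- If `t ⊆ s` is a nonempty witness tuple containing exactly `m ≥ 1` private facts,
then `t' = (t ∩ Own) ∪ {enc (s ∩ Priv)}` is a witness tuple for the encrypted state
`E s` with respect to the encrypted sequence, of size `|t| - m + 1`; hence the
novelty of `E s` is at most `|t| - m + 1`. -/
theorem private_witness_encrypted {Fact : Type} [DecidableEq Fact]
    (Own Priv : Finset Fact) (hdisj : Disjoint Own Priv)
    (enc : Finset Fact → Fact)
    (henc_inj : ∀ p q : Finset Fact, p ⊆ Priv → q ⊆ Priv → p.Nonempty → q.Nonempty →
      enc p = enc q → p = q)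
    (henc_own : ∀ p : Finset Fact, p ⊆ Priv → p.Nonempty → enc p ∉ Own)
    {n : ℕ} (seq : Fin n → Finset Fact) (g : Fin n → ℝ)
    (hseq : ∀ j, seq j ⊆ Own ∪ Priv) (hg : ∀ j, 0 ≤ g j)
    (s : Finset Fact) (hs : s ⊆ Own ∪ Priv) (gs : ℝ) (hgs : 0 ≤ gs)
    (t : Finset Fact) (hts : t ⊆ s) (htne : t.Nonempty)
    (m : ℕ) (hm : (t ∩ Priv).card = m) (hm1 : 1 ≤ m)
    (hwit : ∀ j : Fin n, t ⊆ seq j → gs < g j) :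
    (t ∩ Own) ∪ {enc (s ∩ Priv)} ⊆ encState Own Priv enc s ∧
    ((t ∩ Own) ∪ {enc (s ∩ Priv)}).card = t.card - m + 1 ∧
    (∀ j : Fin n, (t ∩ Own) ∪ {enc (s ∩ Priv)} ⊆ encState Own Priv enc (seq j) →
      gs < g j) ∧
    novelty (fun j => encState Own Priv enc (seq j)) g
        (encState Own Priv enc s) gs ≤ ((t.card - m + 1 : ℕ) : ℕ∞) := by
  have htp_sub : t ∩ Priv ⊆ s ∩ Priv := Finset.inter_subset_inter_right hts
  have htpne : (t ∩ Priv).Nonempty := Finset.card_pos.mp (by omega)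
  have hspne : (s ∩ Priv).Nonempty := htpne.mono htp_sub
  have hsPriv : s ∩ Priv ⊆ Priv := Finset.inter_subset_right
  have hencO : enc (s ∩ Priv) ∉ Own := henc_own _ hsPriv hspne
  -- subset claim
  have hsub : (t ∩ Own) ∪ {enc (s ∩ Priv)} ⊆ encState Own Priv enc s := by
    unfold encState
    rw [if_pos hspne]
    exact Finset.union_subset_union (Finset.inter_subset_inter_right hts)
      (Finset.Subset.refl _)
  -- card claim
  have hdt : Disjoint (t ∩ Own) (t ∩ Priv) :=
    hdisj.mono Finset.inter_subset_right Finset.inter_subset_right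
  have htsplit : (t ∩ Own) ∪ (t ∩ Priv) = t := by
    rw [← Finset.inter_union_distrib_left]
    exact Finset.inter_eq_left.mpr (hts.trans hs)
  have hcardsplit : (t ∩ Own).card + m = t.card := by
    rw [← hm, ← Finset.card_union_of_disjoint hdt, htsplit]
  have hcard : ((t ∩ Own) ∪ {enc (s ∩ Priv)}).card = t.card - m + 1 := by
    have hd : Disjoint (t ∩ Own) ({enc (s ∩ Priv)} : Finset Fact) := by
      simp only [Finset.disjoint_singleton_right, Finset.mem_inter]
      intro ⟨_, h⟩; exact hencO h
    rw [Finset.card_union_of_disjoint hd, Finset.card_singleton]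
    omega
  -- witness claim
  have hwit' : ∀ j : Fin n, (t ∩ Own) ∪ {enc (s ∩ Priv)} ⊆
      encState Own Priv enc (seq j) → gs < g j := by
    intro j hj
    apply hwit
    have hmem : enc (s ∩ Priv) ∈ encState Own Priv enc (seq j) :=
      hj (Finset.mem_union_right _ (Finset.mem_singleton_self _))
    unfold encState at hmem
    rcases Finset.mem_union.mp hmem with h | h
    · exact absurd (Finset.mem_inter.mp h).2 hencO
    · by_cases hne : (seq j ∩ Priv).Nonempty
      · rw [if_pos hne, Finset.mem_singleton] at h
        have heq : s ∩ Priv = seq j ∩ Priv :=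
          henc_inj _ _ hsPriv Finset.inter_subset_right hspne hne h
        -- t = (t ∩ Own) ∪ (t ∩ Priv) ⊆ seq j
        rw [← htsplit]
        apply Finset.union_subset
        · intro x hx
          have hx' : x ∈ encState Own Priv enc (seq j) :=
            hj (Finset.mem_union_left _ hx)
          unfold encState at hx'
          rcases Finset.mem_union.mp hx' with h' | h'
          · exact (Finset.mem_inter.mp h').1
          · rw [if_pos hne, Finset.mem_singleton] at h'
            exact absurd ((Finset.mem_inter.mp hx).2) (by
              rw [h']
              exact fun hxo => henc_own _ Finset.inter_subset_right hne hxo)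
        · intro x hx
          have : x ∈ seq j ∩ Priv := heq ▸ (htp_sub hx)
          exact (Finset.mem_inter.mp this).1
      · rw [if_neg hne] at h; exact absurd h (Finset.notMem_empty _)
  refine ⟨hsub, hcard, hwit', ?_⟩
  apply sInf_le
  exact ⟨(t ∩ Own) ∪ {enc (s ∩ Priv)}, hsub,
    ⟨enc (s ∩ Priv), Finset.mem_union_right _ (Finset.mem_singleton_self _)⟩,
    hwit', by rw [hcard]⟩
end

section
/- Let F be a finite set of facts with |F| = f, and let k ≥ 1. Let s_1, …, s_N be a sequence of subsets of F such that for every index i there exists a nonempty subset t_i ⊆ s_i with |t_i| ≤ k that is not contained in any earlier state s_j with j < i. Then N ≤ Σ_{i=1}^{k} C(f, i), the number of nonempty subsets of F of size at most k. (This is the counting core of the bound on states expanded by k-MA-BFWS when all action costs are 0: each tuple of size at most k can license at most one expanded state.) -/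
/-- Counting core of the expansion bound for `k`-MA-BFWS with zero action costs:
if every state `s i` in the sequence contains a nonempty tuple of size at most `k`
that is true for the first time (not contained in any earlier state), then the
length of the sequence is at most the number of nonempty subsets of the fact set
`F` of size at most `k`, i.e., `∑_{i=1}^{k} C(f, i)`. -/
theorem zero_cost_expansion_bound {Fact : Type} [DecidableEq Fact]
    (F : Finset Fact) (f k N : ℕ) (hf : F.card = f) (hk : 1 ≤ k)
    (s : Fin N → Finset Fact) (hsF : ∀ i, s i ⊆ F)
    (hnov : ∀ i : Fin N, ∃ t : Finset Fact, t ⊆ s i ∧ t.Nonempty ∧ t.card ≤ k ∧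
      ∀ j : Fin N, j < i → ¬ t ⊆ s j) :
    N ≤ ∑ i ∈ Finset.Icc 1 k, f.choose i := by
  classical
  choose t hts htne htk hnew using hnov
  set T : Finset (Finset Fact) := (Finset.Icc 1 k).biUnion (fun i => F.powersetCard i) with hT
  have hmem : ∀ i : Fin N, t i ∈ T := by
    intro i
    simp only [hT, Finset.mem_biUnion, Finset.mem_Icc, Finset.mem_powersetCard]
    exact ⟨(t i).card, ⟨Finset.one_le_card.mpr (htne i), htk i⟩,
      (hts i).trans (hsF i), rfl⟩
  have hinj : Function.Injective t := by
    intro i j hij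
    by_contra hne
    rcases lt_or_gt_of_ne hne with h | h
    · exact hnew j i h (hij ▸ hts i)
    · exact hnew i j h (hij.symm ▸ hts j)
  calc N = Fintype.card (Fin N) := (Fintype.card_fin N).symm
    _ ≤ T.card := by
        have := Fintype.card_le_of_injective (fun i => (⟨t i, hmem i⟩ : T))
          (fun a b h => hinj (Subtype.mk_eq_mk.mp h))
        simpa [Fintype.card_coe] using this
    _ ≤ ∑ i ∈ Finset.Icc 1 k, f.choose i := by
        rw [hT]
        refine (Finset.card_biUnion_le).trans ?_
        apply Finset.sum_le_sum
        intro i _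
        rw [Finset.card_powersetCard, hf]
end

section
/- Let F be a finite set of facts with |F| = f, let k ≥ 1, and let M ∈ ℕ. Let s_1, …, s_N be a sequence of subsets of F with accumulated costs g_1, …, g_N ∈ {0, 1, …, M} such that for every index i there exists a nonempty subset t_i ⊆ s_i with |t_i| ≤ k such that every earlier index j < i with t_i ⊆ s_j satisfies g_j > g_i. Then N ≤ (M + 1) · Σ_{i=1}^{k} C(f, i). (This is the counting core of the bound on states expanded by k-MA-BFWS when action costs are 1: each tuple of size at most k can license at most M + 1 expanded states, one per achievable accumulated cost.) -/
/-- Counting core of the expansion bound for `k`-MA-BFWS with unit action costs: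
states carry natural-number accumulated costs bounded by `M`, and every state `s i`
contains a nonempty tuple `t` of size at most `k` such that every earlier state
containing `t` has strictly larger accumulated cost. Then the length of the
sequence is at most `(M + 1) · ∑_{i=1}^{k} C(f, i)`: each tuple of size at most
`k` licenses at most one expanded state per achievable accumulated cost. -/
theorem unit_cost_expansion_bound {Fact : Type} [DecidableEq Fact]
    (F : Finset Fact) (f k M N : ℕ) (hf : F.card = f) (hk : 1 ≤ k)
    (s : Fin N → Finset Fact) (hsF : ∀ i, s i ⊆ F)
    (g : Fin N → ℕ) (hgM : ∀ i, g i ≤ M)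
    (hnov : ∀ i : Fin N, ∃ t : Finset Fact, t ⊆ s i ∧ t.Nonempty ∧ t.card ≤ k ∧
      ∀ j : Fin N, j < i → t ⊆ s j → g i < g j) :
    N ≤ (M + 1) * ∑ i ∈ Finset.Icc 1 k, f.choose i := by
  classical
  choose t hts htne htk hgt using hnov
  set T : Finset (Finset Fact) :=
    (Finset.Icc 1 k).biUnion (fun n => Finset.powersetCard n F) with hT
  have hmem : ∀ i, t i ∈ T := by
    intro i
    simp only [hT, Finset.mem_biUnion, Finset.mem_Icc, Finset.mem_powersetCard]
    exact ⟨(t i).card, ⟨Finset.one_le_card.mpr (htne i), htk i⟩,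
      (hts i).trans (hsF i), rfl⟩
  have hinj : Set.InjOn (fun i => (t i, g i))
      (Finset.univ : Finset (Fin N)) := by
    intro i _ j _ hij
    simp only [Prod.mk.injEq] at hij
    by_contra hne
    rcases lt_or_gt_of_ne hne with h | h
    · have := hgt j i h (hij.1 ▸ hts i)
      omega
    · have := hgt i j h (hij.1 ▸ hts j)
      omega
  have hmaps : ∀ i ∈ (Finset.univ : Finset (Fin N)),
      (t i, g i) ∈ T ×ˢ Finset.range (M + 1) := by
    intro i _
    exact Finset.mem_product.mpr ⟨hmem i, Finset.mem_range.mpr (by have := hgM i; omega)⟩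
  have hcard := Finset.card_le_card_of_injOn _ hmaps hinj
  simp only [Finset.card_univ, Fintype.card_fin, Finset.card_product,
    Finset.card_range] at hcard
  have hTcard : T.card ≤ ∑ i ∈ Finset.Icc 1 k, f.choose i := by
    calc T.card ≤ ∑ n ∈ Finset.Icc 1 k, (Finset.powersetCard n F).card :=
      Finset.card_biUnion_le
    _ = ∑ i ∈ Finset.Icc 1 k, f.choose i := by
        simp [Finset.card_powersetCard, hf]
  calc N ≤ T.card * (M + 1) := hcard
  _ ≤ (∑ i ∈ Finset.Icc 1 k, f.choose i) * (M + 1) :=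
      Nat.mul_le_mul_right _ hTcard
  _ = (M + 1) * ∑ i ∈ Finset.Icc 1 k, f.choose i := Nat.mul_comm _ _
end

section
/- Let F be a finite set of facts with |F| = f, let k ≥ 1, and let V be a finite set of nonnegative real numbers. Let s_1, …, s_N be a sequence of subsets of F with accumulated costs g_1, …, g_N ∈ V such that for every index i there exists a nonempty subset t_i ⊆ s_i with |t_i| ≤ k such that every earlier index j < i with t_i ⊆ s_j satisfies g_j > g_i. Then N ≤ |V| · Σ_{i=1}^{k} C(f, i). (This is the counting core of the bound on states expanded by k-MA-BFWS under a general nonnegative real cost function: each tuple of size at most k can license at most one expanded state per distinct achievable accumulated-cost value.) -/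
/-- Counting core of the expansion bound for `k`-MA-BFWS under a general
nonnegative real cost function: accumulated costs are drawn from a finite set `V`
of nonnegative reals, and every state `s i` contains a nonempty tuple `t` of size
at most `k` such that every earlier state containing `t` has strictly larger
accumulated cost. Then the length of the sequence is at most
`|V| · ∑_{i=1}^{k} C(f, i)`: each tuple of size at most `k` licenses at most one
expanded state per distinct achievable accumulated-cost value. -/
theorem real_cost_expansion_bound {Fact : Type} [DecidableEq Fact]
    (F : Finset Fact) (f k N : ℕ) (hf : F.card = f) (hk : 1 ≤ k)
    (V : Finset ℝ) (hV : ∀ v ∈ V, 0 ≤ v)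
    (s : Fin N → Finset Fact) (hsF : ∀ i, s i ⊆ F)
    (g : Fin N → ℝ) (hgV : ∀ i, g i ∈ V)
    (hnov : ∀ i : Fin N, ∃ t : Finset Fact, t ⊆ s i ∧ t.Nonempty ∧ t.card ≤ k ∧
      ∀ j : Fin N, j < i → t ⊆ s j → g i < g j) :
    N ≤ V.card * ∑ i ∈ Finset.Icc 1 k, f.choose i := by
  classical
  choose t ht hne hcard hmin using hnov
  set T : Finset (Finset Fact) := (Finset.Icc 1 k).biUnion (fun i => F.powersetCard i) with hT
  have hTcard : T.card = ∑ i ∈ Finset.Icc 1 k, f.choose i := by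
    rw [hT, Finset.card_biUnion]
    · exact Finset.sum_congr rfl (fun i _ => by rw [Finset.card_powersetCard, hf])
    · intro a _ b _ hab
      apply Finset.disjoint_left.mpr
      intro x hxa hxb
      rw [Finset.mem_powersetCard] at hxa hxb
      exact hab (hxa.2.symm.trans hxb.2)
  have key : N ≤ (T ×ˢ V).card := by
    have := Finset.card_le_card_of_injOn (s := (Finset.univ : Finset (Fin N)))
      (t := T ×ˢ V) (fun i : Fin N => (t i, g i)) ?_ ?_
    · simpa using this
    · intro i _
      refine Finset.mem_product.mpr ⟨?_, hgV i⟩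
      refine Finset.mem_biUnion.mpr ⟨(t i).card, ?_, ?_⟩
      · exact Finset.mem_Icc.mpr ⟨(hne i).card_pos, hcard i⟩
      · exact Finset.mem_powersetCard.mpr ⟨(ht i).trans (hsF i), rfl⟩
    · intro i _ j _ hij
      simp only [Prod.mk.injEq] at hij
      by_contra hne'
      rcases lt_or_gt_of_ne hne' with h | h
      · have := hmin j i h (hij.1 ▸ ht i)
        linarith [hij.2]
      · have := hmin i j h (hij.1.symm ▸ ht j)
        linarith [hij.2]
  calc N ≤ (T ×ˢ V).card := key
    _ = V.card * ∑ i ∈ Finset.Icc 1 k, f.choose i := by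
        rw [Finset.card_product, hTcard, Nat.mul_comm]
end

section
/- Consider a STRIPS planning problem over a finite set of facts P with initial state I ⊆ P, goal G ⊆ P, and a finite set of actions, each action a having precondition Prec(a) ⊆ P, add effects Add(a) ⊆ P, delete effects Del(a) ⊆ P, and cost Cost(a) > 0. Suppose there is a sequence of tuples t_0, t_1, …, t_n ⊆ P with |t_i| ≤ k for all i, such that: t_0 ⊆ I (so the empty plan is an optimal plan for t_0); for each i < n, every optimal plan for t_i can be extended by a single action into an optimal plan for t_{i+1}; and every optimal plan for t_n is also an optimal plan for G. Then there exist action sequences π_0 ⊆ π_1 ⊆ … ⊆ π_n (each a prefix of the next, π_{i+1} extending π_i by one action) such that π_i is an optimal plan for t_i for each i, π_n is an optimal plan for G, and consequently along the optimal plan π_n for G, for each i the state s_i reached by executing the prefix π_i from I contains the tuple t_i of size at most k, and every plan for t_i has cost at least cost(π_i). -/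
/-- The state reached by executing a sequence of actions from state `s`:
each action `a` transforms `s` into `(s \ del a) ∪ add a`. -/
def execPlan {P A : Type} [DecidableEq P] (add del : A → Finset P)
    (s : Finset P) : List A → Finset P
  | [] => s
  | a :: π => execPlan add del ((s \ del a) ∪ add a) π

/-- An action sequence is applicable from state `s` if each action's precondition
holds in the state reached by the preceding prefix. -/
def Applicable {P A : Type} [DecidableEq P] (prec add del : A → Finset P)
    (s : Finset P) : List A → Prop
  | [] => True
  | a :: π => prec a ⊆ s ∧ Applicable prec add del ((s \ del a) ∪ add a) π

/-- The cost of a plan is the sum of the costs of its actions. -/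
def planCost {A : Type} (cost : A → ℝ) (π : List A) : ℝ := (π.map cost).sum

/-- A plan for a tuple `t` is an action sequence applicable from the initial
state `I` whose reached state contains `t`. -/
def IsPlan {P A : Type} [DecidableEq P] (prec add del : A → Finset P)
    (I t : Finset P) (π : List A) : Prop :=
  Applicable prec add del I π ∧ t ⊆ execPlan add del I π

/-- A plan for `t` is optimal if its cost is minimal among all plans for `t`. -/
def IsOptimal {P A : Type} [DecidableEq P] (prec add del : A → Finset P)
    (cost : A → ℝ) (I t : Finset P) (π : List A) : Prop :=
  IsPlan prec add del I t π ∧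
    ∀ π' : List A, IsPlan prec add del I t π' → planCost cost π ≤ planCost cost π'

open Classical in
noncomputable def chainFun {P A : Type} [DecidableEq P] (prec add del : A → Finset P)
    (cost : A → ℝ) (I : Finset P) (t : ℕ → Finset P) : ℕ → List A
  | 0 => []
  | m+1 =>
    let π := chainFun prec add del cost I t m
    if h : ∃ a : A, IsOptimal prec add del cost I (t (m+1)) (π ++ [a])
    then π ++ [h.choose] else π

open Classical in
theorem chainFun_succ {P A : Type} [DecidableEq P] (prec add del : A → Finset P)
    (cost : A → ℝ) (I : Finset P) (t : ℕ → Finset P) (m : ℕ) :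
    chainFun prec add del cost I t (m+1) =
      if h : ∃ a : A, IsOptimal prec add del cost I (t (m+1))
          (chainFun prec add del cost I t m ++ [a])
      then chainFun prec add del cost I t m ++ [h.choose]
      else chainFun prec add del cost I t m := by
  rw [chainFun]


/-- Structural claim underlying the completeness theorem for `k`-MA-BFWS: if a
STRIPS problem has a width-`k` certificate, i.e., a sequence of tuples
`t 0, …, t n` of size at most `k` with `t 0 ⊆ I`, every optimal plan for `t i`
extendable by a single action to an optimal plan for `t (i+1)`, and every optimal
plan for `t n` also optimal for the goal `G`, then there is a chain of plans
`π 0 ⊆ π 1 ⊆ … ⊆ π n` (each extending the previous by one action) such that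
`π i` is optimal for `t i`, `π n` is optimal for `G`, each state reached by `π i`
contains the size-`≤ k` tuple `t i`, and every plan for `t i` costs at least
`planCost cost (π i)`. -/
theorem width_certificate_optimal_plan_chain
    {P A : Type} [DecidableEq P] [Fintype P] [Fintype A]
    (prec add del : A → Finset P) (cost : A → ℝ) (hcost : ∀ a : A, 0 < cost a)
    (I G : Finset P) (k n : ℕ)
    (t : Fin (n + 1) → Finset P) (htk : ∀ i, (t i).card ≤ k)
    (ht0 : t 0 ⊆ I)
    (hext : ∀ i : Fin n, ∀ π : List A,
      IsOptimal prec add del cost I (t i.castSucc) π →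
      ∃ a : A, IsOptimal prec add del cost I (t i.succ) (π ++ [a]))
    (hlast : ∀ π : List A, IsOptimal prec add del cost I (t (Fin.last n)) π →
      IsOptimal prec add del cost I G π) :
    ∃ π : Fin (n + 1) → List A,
      (∀ i : Fin n, ∃ a : A, π i.succ = π i.castSucc ++ [a]) ∧
      (∀ i, IsOptimal prec add del cost I (t i) (π i)) ∧
      IsOptimal prec add del cost I G (π (Fin.last n)) ∧
      (∀ i, t i ⊆ execPlan add del I (π i)) ∧
      (∀ i, ∀ π' : List A, IsPlan prec add del I (t i) π' →
        planCost cost (π i) ≤ planCost cost π') := by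
  classical
  set t' : ℕ → Finset P := fun m => t ⟨min m n, by omega⟩ with ht'
  have t'eq : ∀ (m : ℕ) (h : m ≤ n), t' m = t ⟨m, by omega⟩ := by
    intro m h
    simp only [ht']
    congr 1
    exact Fin.ext (by simp only [Fin.val_mk]; omega)
  have key : ∀ m, m ≤ n →
      IsOptimal prec add del cost I (t' m) (chainFun prec add del cost I t' m) := by
    intro m
    induction m with
    | zero =>
      intro _
      rw [t'eq 0 (by omega)]
      refine ⟨⟨trivial, ?_⟩, ?_⟩
      · rw [chainFun]; exact ht0
      · intro π' _
        rw [chainFun]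
        simp only [planCost, List.map_nil, List.sum_nil]
        exact List.sum_nonneg (by
          intro x hx
          obtain ⟨a, _, rfl⟩ := List.mem_map.1 hx
          exact (hcost a).le)
    | succ m ih =>
      intro hm
      have hmn : m < n := by omega
      have opt : IsOptimal prec add del cost I (t (Fin.castSucc ⟨m, hmn⟩))
          (chainFun prec add del cost I t' m) := by
        have h1 := ih (by omega)
        rwa [t'eq m (by omega)] at h1
      have hex : ∃ a : A, IsOptimal prec add del cost I (t' (m+1))
          (chainFun prec add del cost I t' m ++ [a]) := by
        rw [t'eq (m+1) hm]
        exact hext ⟨m, hmn⟩ _ opt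
      rw [chainFun_succ, dif_pos hex]
      exact hex.choose_spec
  have htt : ∀ i : Fin (n+1), t' i.val = t i := by
    intro i
    rw [t'eq i.val (by omega)]
  refine ⟨fun i => chainFun prec add del cost I t' i.val, ?_, ?_, ?_, ?_, ?_⟩
  · intro i
    have hmn : i.val < n := i.isLt
    have opt : IsOptimal prec add del cost I (t i.castSucc)
        (chainFun prec add del cost I t' i.val) := by
      have h1 := key i.val (by omega)
      rwa [t'eq i.val (by omega)] at h1
    have hex : ∃ a : A, IsOptimal prec add del cost I (t' (i.val+1))
        (chainFun prec add del cost I t' i.val ++ [a]) := by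
      rw [t'eq (i.val+1) (by omega)]
      exact hext i _ opt
    refine ⟨hex.choose, ?_⟩
    show chainFun prec add del cost I t' (i.val + 1) = _
    rw [chainFun_succ, dif_pos hex]
    rfl
  · intro i
    have := key i.val (by omega)
    rwa [htt] at this
  · apply hlast
    have := key n (le_refl n)
    rwa [t'eq n (le_refl n)] at this
  · intro i
    have := key i.val (by omega)
    rw [htt] at this
    exact this.1.2
  · intro i π' hπ'
    have := key i.val (by omega)
    rw [htt] at this
    exact this.2 π' hπ'
end
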